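/- Let (X,d) and (Y,μ) be metric spaces, let 𝓑 be a bornology on X, let (G,≥) be a directed set and I a non-trivial ideal of subsets of G with associated filter F(I). Equip X × Y with the metric d × μ given by the maximum of the coordinate distances, and let 𝓑* be the bornology on X × Y generated by the base {B × Y : B ∈ 𝓑}. Let {(D_γ,u_γ)}_{γ∈G} be a net of partial maps from X to Y and (D,u) a partial map from X to Y. Then the net {(D_γ,u_γ)} is two-sidedly P_I(𝓑)-convergent to (D,u) (i.e. both P_I^−(𝓑)- and P_I^+(𝓑)-convergent) if and only if the net of graphs {Gr(u_γ)}_{γ∈G} is two-sidedly bornologically I-convergent to Gr(u) with respect to 𝓑* in X × Y (i.e. both lower and upper bornologically I-convergent). -/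
import Mathlib


open Set Metric

/-- A non-trivial ideal of subsets of `G`: contains `∅`, closed under finite unions
and under taking subsets, and does not contain `G` itself. -/
structure SetIdeal (G : Type*) where
  sets : Set (Set G)
  empty_mem : (∅ : Set G) ∈ sets
  union_mem : ∀ A B : Set G, A ∈ sets → B ∈ sets → A ∪ B ∈ sets
  subset_mem : ∀ A B : Set G, A ∈ sets → B ⊆ A → B ∈ sets
  univ_not_mem : (Set.univ : Set G) ∉ sets

/-- The filter associated with an ideal: `F(I) = {A ⊆ G : G \ A ∈ I}`. -/
def SetIdeal.F {G : Type*} (I : SetIdeal G) : Set (Set G) :=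
  {A : Set G | Aᶜ ∈ I.sets}

/-- A bornology on `X`: a family of nonempty subsets of `X` covering `X`,
closed under finite unions and under taking nonempty subsets. -/
structure Borno (X : Type*) where
  sets : Set (Set X)
  nonempty_mem : ∀ B ∈ sets, B.Nonempty
  covers : ∀ x : X, ∃ B ∈ sets, x ∈ B
  union_mem : ∀ A B : Set X, A ∈ sets → B ∈ sets → A ∪ B ∈ sets
  subset_mem : ∀ A B : Set X, A ∈ sets → B ⊆ A → B.Nonempty → B ∈ sets

/-- A partial map from `X` to `Y`: a nonempty closed subset `dom ⊆ X`
together with a map defined on it (modelled as a total map `X → Y`,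
only its values on `dom` are ever used). -/
structure PartialMap (X Y : Type*) [TopologicalSpace X] where
  dom : Set X
  dom_nonempty : dom.Nonempty
  dom_closed : IsClosed dom
  toFun : X → Y

/-- `P_I^-(𝓑)`-convergence (lower bornological `I`-convergence) of a net of
partial maps: for every `B ∈ 𝓑` and `ε > 0`,
`{γ : ∀ B₁ ⊆ B, u(D ∩ B₁) ⊆ [u_γ(D_γ ∩ B₁^ε)]^ε} ∈ F(I)`. -/
def PIlower {G X Y : Type*} [MetricSpace X] [MetricSpace Y]
    (I : SetIdeal G) (𝓑 : Borno X) (P : G → PartialMap X Y) (Q : PartialMap X Y) : Prop :=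
  ∀ B ∈ 𝓑.sets, ∀ ε : ℝ, 0 < ε →
    {γ : G | ∀ B₁ ⊆ B, Q.toFun '' (Q.dom ∩ B₁) ⊆
      thickening ε ((P γ).toFun '' ((P γ).dom ∩ thickening ε B₁))} ∈ I.F

/-- `P_I^+(𝓑)`-convergence (upper bornological `I`-convergence) of a net of
partial maps: for every `B ∈ 𝓑` and `ε > 0`,
`{γ : ∀ B₁ ⊆ B, u_γ(D_γ ∩ B₁) ⊆ [u(D ∩ B₁^ε)]^ε} ∈ F(I)`. -/
def PIupper {G X Y : Type*} [MetricSpace X] [MetricSpace Y]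
    (I : SetIdeal G) (𝓑 : Borno X) (P : G → PartialMap X Y) (Q : PartialMap X Y) : Prop :=
  ∀ B ∈ 𝓑.sets, ∀ ε : ℝ, 0 < ε →
    {γ : G | ∀ B₁ ⊆ B, (P γ).toFun '' ((P γ).dom ∩ B₁) ⊆
      thickening ε (Q.toFun '' (Q.dom ∩ thickening ε B₁))} ∈ I.F

/-- Lower bornological `I`-convergence of a net of sets:
for every `B ∈ 𝓑` and `ε > 0`, `{γ : D ∩ B ⊆ (A γ)^ε} ∈ F(I)`. -/
def lowerBConvI {G X : Type*} [MetricSpace X] (I : SetIdeal G) (𝓑 : Borno X)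
    (A : G → Set X) (D : Set X) : Prop :=
  ∀ B ∈ 𝓑.sets, ∀ ε : ℝ, 0 < ε → {γ : G | D ∩ B ⊆ thickening ε (A γ)} ∈ I.F

/-- Upper bornological `I`-convergence of a net of sets:
for every `B ∈ 𝓑` and `ε > 0`, `{γ : A γ ∩ B ⊆ D^ε} ∈ F(I)`. -/
def upperBConvI {G X : Type*} [MetricSpace X] (I : SetIdeal G) (𝓑 : Borno X)
    (A : G → Set X) (D : Set X) : Prop :=
  ∀ B ∈ 𝓑.sets, ∀ ε : ℝ, 0 < ε → {γ : G | A γ ∩ B ⊆ thickening ε D} ∈ I.F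

/-- The graph of a partial map: `Gr(u) = {(x, u x) : x ∈ dom}`. -/
def PartialMap.graph {X Y : Type*} [TopologicalSpace X] (Q : PartialMap X Y) : Set (X × Y) :=
  (fun x => (x, Q.toFun x)) '' Q.dom

/-- The bornology `𝓑*` on `X × Y` generated by the base `{B × Y : B ∈ 𝓑}`:
its members are the nonempty subsets of the basic sets `B × Y`. -/
def prodBorn {X Y : Type*} (𝓑 : Borno X) : Borno (X × Y) where
  sets := {A : Set (X × Y) | A.Nonempty ∧ ∃ B ∈ 𝓑.sets, A ⊆ B ×ˢ (Set.univ : Set Y)}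
  nonempty_mem := fun _ hA => hA.1
  covers := fun p => by
    obtain ⟨B, hB, hx⟩ := 𝓑.covers p.1
    exact ⟨B ×ˢ (Set.univ : Set Y), ⟨⟨p, ⟨hx, trivial⟩⟩, ⟨B, hB, subset_rfl⟩⟩, ⟨hx, trivial⟩⟩
  union_mem := by
    rintro A₁ A₂ ⟨hne₁, B₁, hB₁, hs₁⟩ ⟨hne₂, B₂, hB₂, hs₂⟩
    refine ⟨hne₁.mono Set.subset_union_left, B₁ ∪ B₂, 𝓑.union_mem _ _ hB₁ hB₂, ?_⟩
    exact Set.union_subset (hs₁.trans (Set.prod_mono Set.subset_union_left subset_rfl))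
      (hs₂.trans (Set.prod_mono Set.subset_union_right subset_rfl))
  subset_mem := by
    rintro A₁ A₂ ⟨hne₁, B₁, hB₁, hs₁⟩ hsub hne
    exact ⟨hne, B₁, hB₁, hsub.trans hs₁⟩

lemma SetIdeal.F_mono {G : Type*} (I : SetIdeal G) {A A' : Set G}
    (h : A ∈ I.F) (hs : A ⊆ A') : A' ∈ I.F :=
  I.subset_mem _ _ h (Set.compl_subset_compl.2 hs)

/-- Two-sided `P_I(𝓑)`-convergence of a net of partial maps is equivalent to
two-sided bornological `I`-convergence of the graphs with respect to `𝓑*`. -/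
theorem stmt6 {G : Type*} [Preorder G] [Nonempty G]
    (hdir : ∀ a b : G, ∃ c : G, a ≤ c ∧ b ≤ c)
    {X Y : Type*} [MetricSpace X] [MetricSpace Y]
    (I : SetIdeal G) (𝓑 : Borno X)
    (P : G → PartialMap X Y) (Q : PartialMap X Y) :
    (PIlower I 𝓑 P Q ∧ PIupper I 𝓑 P Q) ↔
      (lowerBConvI I (prodBorn 𝓑) (fun γ => (P γ).graph) Q.graph ∧
        upperBConvI I (prodBorn 𝓑) (fun γ => (P γ).graph) Q.graph) := by
  have hY : Nonempty Y := ⟨Q.toFun Q.dom_nonempty.choose⟩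
  constructor
  · rintro ⟨hl, hu⟩
    constructor
    · rintro A ⟨hAne, B, hB, hAsub⟩ ε hε
      refine I.F_mono (hl B hB ε hε) (fun γ hγ => ?_)
      rintro p ⟨⟨x, hxD, rfl⟩, hpA⟩
      have hxB : x ∈ B := (hAsub hpA).1
      have h2 : Q.toFun x ∈ thickening ε ((P γ).toFun '' ((P γ).dom ∩ thickening ε {x})) :=
        hγ {x} (Set.singleton_subset_iff.2 hxB) ⟨x, ⟨hxD, rfl⟩, rfl⟩
      rw [Metric.mem_thickening_iff] at h2
      obtain ⟨z, ⟨x', ⟨hx'D, hx't⟩, rfl⟩, hdz⟩ := h2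
      rw [Metric.mem_thickening_iff] at hx't
      obtain ⟨w, hw, hdw⟩ := hx't
      rw [Set.mem_singleton_iff] at hw; subst hw
      rw [Metric.mem_thickening_iff]
      refine ⟨(x', (P γ).toFun x'), ⟨x', hx'D, rfl⟩, ?_⟩
      rw [Prod.dist_eq]
      exact max_lt (by rwa [dist_comm]) hdz
    · rintro A ⟨hAne, B, hB, hAsub⟩ ε hε
      refine I.F_mono (hu B hB ε hε) (fun γ hγ => ?_)
      rintro p ⟨⟨x, hxD, rfl⟩, hpA⟩
      have hxB : x ∈ B := (hAsub hpA).1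
      have h2 : (P γ).toFun x ∈ thickening ε (Q.toFun '' (Q.dom ∩ thickening ε {x})) :=
        hγ {x} (Set.singleton_subset_iff.2 hxB) ⟨x, ⟨hxD, rfl⟩, rfl⟩
      rw [Metric.mem_thickening_iff] at h2
      obtain ⟨z, ⟨x', ⟨hx'D, hx't⟩, rfl⟩, hdz⟩ := h2
      rw [Metric.mem_thickening_iff] at hx't
      obtain ⟨w, hw, hdw⟩ := hx't
      rw [Set.mem_singleton_iff] at hw; subst hw
      rw [Metric.mem_thickening_iff]
      refine ⟨(x', Q.toFun x'), ⟨x', hx'D, rfl⟩, ?_⟩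
      rw [Prod.dist_eq]
      exact max_lt (by rwa [dist_comm]) hdz
  · rintro ⟨hl, hu⟩
    constructor
    · intro B hB ε hε
      have hA : (B ×ˢ (Set.univ : Set Y)) ∈ (prodBorn 𝓑).sets :=
        ⟨(𝓑.nonempty_mem B hB).prod Set.univ_nonempty, B, hB, subset_rfl⟩
      refine I.F_mono (hl _ hA ε hε) (fun γ hγ => ?_)
      intro B₁ hB₁ y hy
      obtain ⟨x, ⟨hxD, hxB₁⟩, rfl⟩ := hy
      have hp : (x, Q.toFun x) ∈ thickening ε (P γ).graph :=
        hγ ⟨⟨x, hxD, rfl⟩, ⟨hB₁ hxB₁, trivial⟩⟩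
      rw [Metric.mem_thickening_iff] at hp
      obtain ⟨q, ⟨x', hx'D, rfl⟩, hdq⟩ := hp
      rw [Prod.dist_eq, max_lt_iff] at hdq
      rw [Metric.mem_thickening_iff]
      refine ⟨(P γ).toFun x', ⟨x', ⟨hx'D, ?_⟩, rfl⟩, hdq.2⟩
      rw [Metric.mem_thickening_iff]
      exact ⟨x, hxB₁, by rw [dist_comm]; exact hdq.1⟩
    · intro B hB ε hε
      have hA : (B ×ˢ (Set.univ : Set Y)) ∈ (prodBorn 𝓑).sets :=
        ⟨(𝓑.nonempty_mem B hB).prod Set.univ_nonempty, B, hB, subset_rfl⟩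
      refine I.F_mono (hu _ hA ε hε) (fun γ hγ => ?_)
      intro B₁ hB₁ y hy
      obtain ⟨x, ⟨hxD, hxB₁⟩, rfl⟩ := hy
      have hp : (x, (P γ).toFun x) ∈ thickening ε Q.graph :=
        hγ ⟨⟨x, hxD, rfl⟩, ⟨hB₁ hxB₁, trivial⟩⟩
      rw [Metric.mem_thickening_iff] at hp
      obtain ⟨q, ⟨x', hx'D, rfl⟩, hdq⟩ := hp
      rw [Prod.dist_eq, max_lt_iff] at hdq
      rw [Metric.mem_thickening_iff]
      refine ⟨Q.toFun x', ⟨x', ⟨hx'D, ?_⟩, rfl⟩, hdq.2⟩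
      rw [Metric.mem_thickening_iff]
      exact ⟨x, hxB₁, by rw [dist_comm]; exact hdq.1⟩
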